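/- Let G be a pattern graph and b a !-vertex of G. Then the set of inputs In(COPY_b(G)) is in bijection with the disjoint union of In(G) and In(G) ∩ ω(B(b)) (the wire-vertex inputs of G lying in B(b)); similarly, Out(COPY_b(G)) is in bijection with the disjoint union of Out(G) and Out(G) ∩ ω(B(b)). -/
import Mathlib


/-- Vertex types: node-vertices, wire-vertices and `!`-vertices. -/
inductive VTy : Type
  | node | wire | bang
  deriving DecidableEq

/-- A directed graph whose vertices are typed by `VTy`. -/
structure TGraph (V E : Type) where
  s : E → V
  t : E → V
  ty : V → VTy

namespace TGraph

variable {V E : Type}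

/-- No edge has both a node-vertex source and a node-vertex target. -/
def NoNodeNode (G : TGraph V E) : Prop :=
  ∀ e, ¬ (G.ty (G.s e) = .node ∧ G.ty (G.t e) = .node)

/-- A `G₂`-typed graph: only node- and wire-vertices, no node-node edges. -/
def IsG2 (G : TGraph V E) : Prop :=
  G.NoNodeNode ∧ ∀ v, G.ty v ≠ .bang

/-- A `G₃`-typed graph: no node-node edges, and every edge into a `!`-vertex
comes from a `!`-vertex. -/
def IsG3 (G : TGraph V E) : Prop :=
  G.NoNodeNode ∧ ∀ e, G.ty (G.t e) = .bang → G.ty (G.s e) = .bang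

/-- An input: a wire-vertex all of whose in-edges have `!`-vertex sources.
In a `G₂`-typed graph this says exactly: a wire-vertex with no in-edges. -/
def IsInput (G : TGraph V E) (v : V) : Prop :=
  G.ty v = .wire ∧ ∀ e, G.t e = v → G.ty (G.s e) = .bang

/-- An output: a wire-vertex with no out-edges. -/
def IsOutput (G : TGraph V E) (v : V) : Prop :=
  G.ty v = .wire ∧ ∀ e, G.s e ≠ v

/-- A string graph: a `G₂`-typed graph where every wire-vertex has at most one
in-edge and at most one out-edge. -/
def IsStringGraph (G : TGraph V E) : Prop :=
  G.IsG2 ∧ ∀ v, G.ty v = .wire →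
    (∀ e₁ e₂, G.t e₁ = v → G.t e₂ = v → e₁ = e₂) ∧
    (∀ e₁ e₂, G.s e₁ = v → G.s e₂ = v → e₁ = e₂)

/-- The set of successors of a vertex. -/
def bsucc (G : TGraph V E) (b : V) : Set V := {v | ∃ e, G.s e = b ∧ G.t e = v}

/-- The set of predecessors of a vertex. -/
def bpred (G : TGraph V E) (b : V) : Set V := {v | ∃ e, G.s e = v ∧ G.t e = b}

/-- The full subgraph on a set of vertices, as a standalone graph. -/
def restrict (G : TGraph V E) (S : Set V) :
    TGraph {v : V // v ∈ S} {e : E // G.s e ∈ S ∧ G.t e ∈ S} where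
  s e := ⟨G.s e.1, e.2.1⟩
  t e := ⟨G.t e.1, e.2.2⟩
  ty v := G.ty v.1

/-- A subgraph of a graph. -/
structure Sub (G : TGraph V E) where
  verts : Set V
  edges : Set E
  s_mem : ∀ e ∈ edges, G.s e ∈ verts
  t_mem : ∀ e ∈ edges, G.t e ∈ verts

namespace Sub

variable {G : TGraph V E}

/-- The whole graph as a subgraph of itself. -/
def top (G : TGraph V E) : Sub G :=
  ⟨Set.univ, Set.univ, fun _ _ => trivial, fun _ _ => trivial⟩

def inter (A B : Sub G) : Sub G :=
  ⟨A.verts ∩ B.verts, A.edges ∩ B.edges,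
    fun e he => ⟨A.s_mem e he.1, B.s_mem e he.2⟩,
    fun e he => ⟨A.t_mem e he.1, B.t_mem e he.2⟩⟩

def union (A B : Sub G) : Sub G :=
  ⟨A.verts ∪ B.verts, A.edges ∪ B.edges,
    fun e he => he.elim (fun h => Or.inl (A.s_mem e h)) (fun h => Or.inr (B.s_mem e h)),
    fun e he => he.elim (fun h => Or.inl (A.t_mem e h)) (fun h => Or.inr (B.t_mem e h))⟩

/-- `H∖A` : the largest subgraph of `H` that is disjoint from `A`
(the full subgraph of `H` on the vertices of `H` not in `A`). -/
def minus (H A : Sub G) : Sub G :=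
  ⟨H.verts \ A.verts, {e | e ∈ H.edges ∧ G.s e ∉ A.verts ∧ G.t e ∉ A.verts},
    fun e he => ⟨H.s_mem e he.1, he.2.1⟩,
    fun e he => ⟨H.t_mem e he.1, he.2.2⟩⟩

/-- An input of a subgraph: a wire-vertex of the subgraph all of whose in-edges
(inside the subgraph) have `!`-vertex sources. -/
def IsInput (A : Sub G) (v : V) : Prop :=
  v ∈ A.verts ∧ G.ty v = .wire ∧ ∀ e ∈ A.edges, G.t e = v → G.ty (G.s e) = .bang

/-- An output of a subgraph: a wire-vertex of the subgraph with no out-edges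
inside the subgraph. -/
def IsOutput (A : Sub G) (v : V) : Prop :=
  v ∈ A.verts ∧ G.ty v = .wire ∧ ∀ e ∈ A.edges, G.s e ≠ v

/-- `A` is open in `H`: `In(H∖A) ⊆ In(H)` and `Out(H∖A) ⊆ Out(H)`. -/
def IsOpenIn (A H : Sub G) : Prop :=
  (∀ v, (H.minus A).IsInput v → H.IsInput v) ∧
  (∀ v, (H.minus A).IsOutput v → H.IsOutput v)

/-- `A` is an open subgraph of `G`. -/
def IsOpen (A : Sub G) : Prop := A.IsOpenIn (top G)

end Sub

/-- The full subgraph on a vertex set, as a subgraph. -/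
def fullSub (G : TGraph V E) (S : Set V) : Sub G :=
  ⟨S, {e | G.s e ∈ S ∧ G.t e ∈ S}, fun _ he => he.1, fun _ he => he.2⟩

/-- `B(b)` : the `!`-box of `b`, i.e. the full subgraph on the successors of `b`. -/
def bbox (G : TGraph V E) (b : V) : Sub G := G.fullSub (G.bsucc b)

/-- Edges of `Σ(G)`, the full subgraph on node- and wire-vertices. -/
def sigmaEdges (G : TGraph V E) : Set E :=
  {e | G.ty (G.s e) ≠ .bang ∧ G.ty (G.t e) ≠ .bang}

/-- Edges of `β(G)`, the full subgraph on `!`-vertices. -/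
def betaEdges (G : TGraph V E) : Set E :=
  {e | G.ty (G.s e) = .bang ∧ G.ty (G.t e) = .bang}

/-- `Σ(G)` is a string graph. -/
def SigmaIsStringGraph (G : TGraph V E) : Prop :=
  G.NoNodeNode ∧ ∀ v, G.ty v = .wire →
    (∀ e₁ e₂, e₁ ∈ G.sigmaEdges → e₂ ∈ G.sigmaEdges → G.t e₁ = v → G.t e₂ = v → e₁ = e₂) ∧
    (∀ e₁ e₂, e₁ ∈ G.sigmaEdges → e₂ ∈ G.sigmaEdges → G.s e₁ = v → G.s e₂ = v → e₁ = e₂)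

/-- `β(G)` is posetal: simple and, as a relation on `!`-vertices, a partial order. -/
def BetaPosetal (G : TGraph V E) : Prop :=
  (∀ e₁ e₂, e₁ ∈ G.betaEdges → e₂ ∈ G.betaEdges →
    G.s e₁ = G.s e₂ → G.t e₁ = G.t e₂ → e₁ = e₂) ∧
  (∀ b, G.ty b = .bang → b ∈ G.bsucc b) ∧
  (∀ b b', G.ty b = .bang → G.ty b' = .bang →
    b' ∈ G.bsucc b → b ∈ G.bsucc b' → b = b') ∧
  (∀ a b c, G.ty a = .bang → G.ty b = .bang → G.ty c = .bang →
    b ∈ G.bsucc a → c ∈ G.bsucc b → c ∈ G.bsucc a)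

/-- A pattern graph. -/
def IsPattern (G : TGraph V E) : Prop :=
  G.IsG3 ∧ G.SigmaIsStringGraph ∧ G.BetaPosetal ∧
  (∀ b, G.ty b = .bang → (G.bbox b).IsOpen) ∧
  (∀ b b', G.ty b = .bang → G.ty b' = .bang → b' ∈ G.bsucc b →
    G.bsucc b' ⊆ G.bsucc b)

end TGraph

namespace TGraph

variable {V E : Type}

open Classical in
/-- The canonical map into the vertex set of `COPY_b(G)`: vertices of `B(b)`
go to the second copy, all other vertices to the (shared) first copy. -/
noncomputable def embed (G : TGraph V E) (b v : V) : V ⊕ {w : V // w ∈ G.bsucc b} :=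
  if h : v ∈ G.bsucc b then Sum.inr ⟨v, h⟩ else Sum.inl v

theorem embed_of_mem (G : TGraph V E) {b v : V} (h : v ∈ G.bsucc b) :
    G.embed b v = Sum.inr ⟨v, h⟩ := by
  simp [embed, h]

theorem embed_of_not_mem (G : TGraph V E) {b v : V} (h : v ∉ G.bsucc b) :
    G.embed b v = Sum.inl v := by
  simp [embed, h]

/-- `COPY_b(G)` : the pushout of the inclusion `G∖B(b) ↪ G` along itself,
computed concretely: two copies of `G` glued along `G∖B(b)`. -/
noncomputable def copyGraph (G : TGraph V E) (b : V) :
    TGraph (V ⊕ {w : V // w ∈ G.bsucc b})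
      (E ⊕ {e : E // G.s e ∈ G.bsucc b ∨ G.t e ∈ G.bsucc b}) where
  s := Sum.elim (fun e => Sum.inl (G.s e)) (fun e => G.embed b (G.s e.1))
  t := Sum.elim (fun e => Sum.inl (G.t e)) (fun e => G.embed b (G.t e.1))
  ty := Sum.elim G.ty fun v => G.ty v.1

/-- `DROP_b(G) = G∖{b}`. -/
def dropGraph (G : TGraph V E) (b : V) :=
  G.restrict {v : V | v ≠ b}

/-- `KILL_b(G) = G∖B(b)`. -/
def killGraph (G : TGraph V E) (b : V) :=
  G.restrict {v : V | v ∉ G.bsucc b}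

end TGraph

namespace TGraph

variable {V E : Type}

theorem ty_embed (G : TGraph V E) (b w : V) :
    (G.copyGraph b).ty (G.embed b w) = G.ty w := by
  unfold embed; split <;> rfl

theorem copy_input_inl {G : TGraph V E} {b v : V} :
    (G.copyGraph b).IsInput (Sum.inl v) ↔ G.IsInput v := by
  constructor
  · rintro ⟨h1, h2⟩
    refine ⟨h1, fun e he => ?_⟩
    exact h2 (Sum.inl e) (by simp [copyGraph, he])
  · rintro ⟨h1, h2⟩
    refine ⟨h1, fun x hx => ?_⟩
    cases x with
    | inl e =>
      simp only [copyGraph, Sum.elim_inl, Sum.inl.injEq] at hx ⊢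
      exact h2 e hx
    | inr e =>
      simp only [copyGraph, Sum.elim_inr] at hx ⊢
      by_cases hm : G.t e.1 ∈ G.bsucc b
      · rw [G.embed_of_mem hm] at hx; exact absurd hx (by simp)
      · rw [G.embed_of_not_mem hm] at hx
        show (G.copyGraph b).ty (G.embed b (G.s e.1)) = VTy.bang
        rw [G.ty_embed]
        exact h2 e.1 (Sum.inl.inj hx)

theorem copy_input_inr {G : TGraph V E} {b : V} {w : {w : V // w ∈ G.bsucc b}} :
    (G.copyGraph b).IsInput (Sum.inr w) ↔ G.IsInput w.1 := by
  constructor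
  · rintro ⟨h1, h2⟩
    refine ⟨h1, fun e he => ?_⟩
    have := h2 (Sum.inr ⟨e, Or.inr (he ▸ w.2)⟩) ?_
    · rwa [show (G.copyGraph b).s (Sum.inr ⟨e, Or.inr (he ▸ w.2)⟩) =
        G.embed b (G.s e) from rfl, G.ty_embed] at this
    · show G.embed b (G.t e) = Sum.inr w
      rw [G.embed_of_mem (he ▸ w.2)]
      exact congrArg Sum.inr (Subtype.ext he)
  · rintro ⟨h1, h2⟩
    refine ⟨h1, fun x hx => ?_⟩
    cases x with
    | inl e => exact absurd hx (by simp [copyGraph])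
    | inr e =>
      simp only [copyGraph, Sum.elim_inr] at hx ⊢
      by_cases hm : G.t e.1 ∈ G.bsucc b
      · rw [G.embed_of_mem hm] at hx
        have ht : G.t e.1 = w.1 := congrArg Subtype.val (Sum.inr.inj hx)
        show (G.copyGraph b).ty (G.embed b (G.s e.1)) = VTy.bang
        rw [G.ty_embed]
        exact h2 e.1 ht
      · rw [G.embed_of_not_mem hm] at hx; exact absurd hx (by simp)

theorem copy_output_inl {G : TGraph V E} {b v : V} :
    (G.copyGraph b).IsOutput (Sum.inl v) ↔ G.IsOutput v := by
  constructor
  · rintro ⟨h1, h2⟩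
    refine ⟨h1, fun e he => h2 (Sum.inl e) (by simp [copyGraph, he])⟩
  · rintro ⟨h1, h2⟩
    refine ⟨h1, fun x hx => ?_⟩
    cases x with
    | inl e =>
      simp only [copyGraph, Sum.elim_inl, Sum.inl.injEq] at hx
      exact h2 e hx
    | inr e =>
      simp only [copyGraph, Sum.elim_inr] at hx
      by_cases hm : G.s e.1 ∈ G.bsucc b
      · rw [G.embed_of_mem hm] at hx; exact absurd hx (by simp)
      · rw [G.embed_of_not_mem hm] at hx
        exact h2 e.1 (Sum.inl.inj hx)

theorem copy_output_inr {G : TGraph V E} {b : V} {w : {w : V // w ∈ G.bsucc b}} :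
    (G.copyGraph b).IsOutput (Sum.inr w) ↔ G.IsOutput w.1 := by
  constructor
  · rintro ⟨h1, h2⟩
    refine ⟨h1, fun e he => ?_⟩
    have := h2 (Sum.inr ⟨e, Or.inl (he ▸ w.2)⟩)
    apply this
    show G.embed b (G.s e) = Sum.inr w
    rw [G.embed_of_mem (he ▸ w.2)]
    exact congrArg Sum.inr (Subtype.ext he)
  · rintro ⟨h1, h2⟩
    refine ⟨h1, fun x hx => ?_⟩
    cases x with
    | inl e => exact absurd hx (by simp [copyGraph])
    | inr e =>
      simp only [copyGraph, Sum.elim_inr] at hx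
      by_cases hm : G.s e.1 ∈ G.bsucc b
      · rw [G.embed_of_mem hm] at hx
        exact h2 e.1 (congrArg Subtype.val (Sum.inr.inj hx))
      · rw [G.embed_of_not_mem hm] at hx; exact absurd hx (by simp)

noncomputable def copyEquiv {G : TGraph V E} {b : V}
    (P : ∀ {V' E' : Type}, TGraph V' E' → V' → Prop)
    (hinl : ∀ v : V, P (G.copyGraph b) (Sum.inl v) ↔ P G v)
    (hinr : ∀ w : {w : V // w ∈ G.bsucc b},
      P (G.copyGraph b) (Sum.inr w) ↔ P G w.1) :
    {x // P (G.copyGraph b) x} ≃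
      ({v // P G v} ⊕ {v // P G v ∧ v ∈ G.bsucc b}) where
  toFun x := match x with
    | ⟨Sum.inl v, h⟩ => Sum.inl ⟨v, (hinl v).1 h⟩
    | ⟨Sum.inr w, h⟩ => Sum.inr ⟨w.1, (hinr w).1 h, w.2⟩
  invFun x := match x with
    | Sum.inl ⟨v, h⟩ => ⟨Sum.inl v, (hinl v).2 h⟩
    | Sum.inr ⟨v, h⟩ => ⟨Sum.inr ⟨v, h.2⟩, (hinr ⟨v, h.2⟩).2 h.1⟩
  left_inv x := by rcases x with ⟨(v | w), h⟩ <;> rfl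
  right_inv x := by rcases x with ⟨v, h⟩ | ⟨v, h⟩ <;> rfl

end TGraph

/-- `In(COPY_b(G))` is in bijection with the disjoint union of
`In(G)` and `In(G) ∩ ω(B(b))`, and similarly for outputs. -/
theorem statement_9 {V E : Type} {G : TGraph V E} (hG : G.IsPattern)
    (b : V) (hb : G.ty b = .bang) :
    Nonempty ({x // (G.copyGraph b).IsInput x} ≃
      ({v // G.IsInput v} ⊕ {v // G.IsInput v ∧ v ∈ G.bsucc b})) ∧
    Nonempty ({x // (G.copyGraph b).IsOutput x} ≃
      ({v // G.IsOutput v} ⊕ {v // G.IsOutput v ∧ v ∈ G.bsucc b})) := by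
  exact ⟨⟨TGraph.copyEquiv (fun G' v => G'.IsInput v)
      (fun _ => TGraph.copy_input_inl) (fun _ => TGraph.copy_input_inr)⟩,
    ⟨TGraph.copyEquiv (fun G' v => G'.IsOutput v)
      (fun _ => TGraph.copy_output_inl) (fun _ => TGraph.copy_output_inr)⟩⟩
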